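/- Let n ≥ 2, let c be a coloring of n strands, set t = t_{c_n}, let j₀ ∈ {1,…,μ} be any color and set s = t_{j₀}. Suppose A is an (n−1)×(n−1) matrix over Λ_μ and v is a row vector of length n−1 over Λ_μ such that (A, v) satisfies the boundary relation for c, and let M = [[A,0],[v,1]]. Let G'' be the n×n matrix equal to the identity except in its last 2×2 diagonal block, which equals [[1, 1 − s^{−1}],[0, s^{−1}t^{−1}]] (G'' is the reduced colored Gassner matrix of σ_n^{−2} viewed as a braid on n+1 strands with coloring (c_1,…,c_n,j₀)). Then (T^c_n − 1) · det(M·G'' − I_n) = [ (s^{−1}t^{−1} − 1)(T^c_n − 1) + (T^c_{n−1} − 1)(1 − s^{−1}) ] · det(A − I_{n−1}). (This is the determinant identity used to verify Jiang's axiom (R3) for the paper's invariant f.) -/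

import Mathlib

noncomputable section

open scoped BigOperators

/-- The multivariable Laurent polynomial ring `Λ_μ = ℤ[t₁^{±1},…,t_μ^{±1}]`,
realized as the group ℤ-algebra of `ℤ^μ`. -/
abbrev Lau (μ : ℕ) : Type := AddMonoidAlgebra ℤ (Fin μ →₀ ℤ)

instance (μ : ℕ) : IsDomain (Lau μ) := NoZeroDivisors.to_isDomain _

/-- The distinguished unit `t_i` of `Λ_μ`. -/
def tU {μ : ℕ} (i : Fin μ) : (Lau μ)ˣ where
  val := AddMonoidAlgebra.single (Finsupp.single i 1) 1
  inv := AddMonoidAlgebra.single (Finsupp.single i (-1)) 1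
  val_inv := by
    rw [AddMonoidAlgebra.single_mul_single, ← Finsupp.single_add]
    norm_num; rfl
  inv_val := by
    rw [AddMonoidAlgebra.single_mul_single, ← Finsupp.single_add]
    norm_num; rfl

/-- `T^c_i = t_{c_1} ⋯ t_{c_i}` (product of the first `i` values of the coloring,
zero-indexed: product over indices `k ≤ i`), as a unit of `Λ_μ`. -/
def TU {μ n : ℕ} (c : Fin n → Fin μ) (i : Fin n) : (Lau μ)ˣ :=
  ∏ k ∈ Finset.Iic i, tU (c k)

/-- The `n×n` matrix `[[A,0],[v,1]]` built from an `(n−1)×(n−1)` matrix `A`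
and a row vector `v` of length `n−1` (here `n = l+2`): the upper-left block is `A`,
the last column is `(0,…,0,1)ᵀ` and the last row begins with `v`. -/
def aug {μ l : ℕ} (A : Matrix (Fin (l+1)) (Fin (l+1)) (Lau μ)) (v : Fin (l+1) → Lau μ) :
    Matrix (Fin (l+2)) (Fin (l+2)) (Lau μ) := fun i j =>
  if hi : (i : ℕ) < l + 1 then
    if hj : (j : ℕ) < l + 1 then A ⟨i, hi⟩ ⟨j, hj⟩ else 0
  else
    if hj : (j : ℕ) < l + 1 then v ⟨j, hj⟩ else 1

/-- The pair `(A, v)` satisfies the boundary relation for the coloring `c`: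
for every column `j`, `∑_{i=1}^{n−1} (T^c_i − 1)(A − I)_{ij} = −(T^c_n − 1) v_j`. -/
def BoundaryRel {μ l : ℕ} (c : Fin (l+2) → Fin μ) (A : Matrix (Fin (l+1)) (Fin (l+1)) (Lau μ))
    (v : Fin (l+1) → Lau μ) : Prop :=
  ∀ j : Fin (l+1), ∑ i : Fin (l+1),
      ((TU c i.castSucc : Lau μ) - 1) * (A - 1) i j
    = -((TU c (Fin.last (l+1)) : Lau μ) - 1) * v j

/-- The `(l+2)×(l+2)` matrix equal to the identity except in its last `2×2`
diagonal block, which is `[[a,b],[c,d]]`. -/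
def last2Block {μ : ℕ} (l : ℕ) (a b c d : Lau μ) :
    Matrix (Fin (l+2)) (Fin (l+2)) (Lau μ) := fun i j =>
  if (i : ℕ) = l ∧ (j : ℕ) = l then a
  else if (i : ℕ) = l ∧ (j : ℕ) = l + 1 then b
  else if (i : ℕ) = l + 1 ∧ (j : ℕ) = l then c
  else if (i : ℕ) = l + 1 ∧ (j : ℕ) = l + 1 then d
  else if i = j then 1 else 0

/-!
Since `G''` differs from the identity only in its last column, subtracting `1 - s⁻¹` times
column `n - 1` from column `n` of `M G'' - I` leaves the columns of `M - I` except the last one,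
which becomes `(1 - s⁻¹) e_{n-1} + (s⁻¹t⁻¹ - 1) e_n`. Expanding along it gives
`det (M G'' - I) = (s⁻¹t⁻¹ - 1) det (A - I) - (1 - s⁻¹) det (A - I with last row v)`.
The boundary relation says that `(T_n - 1) v` is the combination of the rows of `A - I` with
coefficients `-(T_i - 1)`, so by multilinearity `(T_n - 1) det (A - I with last row v)` is
`-(T_{n-1} - 1) det (A - I)`.
-/

namespace Matrix

variable {R : Type*} [CommRing R]

theorem mul_det_updateRow_of_smul_eq_sum {n : Type*} [Fintype n] [DecidableEq n]
    (B : Matrix n n R) (r : n) (v w : n → R) (a : R) (h : a • v = ∑ k, w k • B k) :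
    a * (B.updateRow r v).det = w r * B.det := by
  rw [← det_updateRow_smul, h, det_updateRow_sum, smul_eq_mul]

theorem det_updateCol_single_fin {n : ℕ} (B : Matrix (Fin (n+1)) (Fin (n+1)) R)
    (i j : Fin (n+1)) :
    (B.updateCol j (Pi.single i 1)).det
      = (-1) ^ (i + j : ℕ) * (B.submatrix i.succAbove j.succAbove).det := by
  rw [← det_transpose, ← updateRow_transpose, ← adjugate_apply,
    adjugate_fin_succ_eq_det_submatrix, ← transpose_submatrix, det_transpose, add_comm]

end Matrix

section Aug

variable {μ l : ℕ} (A : Matrix (Fin (l+1)) (Fin (l+1)) (Lau μ)) (v : Fin (l+1) → Lau μ)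

@[simp] theorem aug_castSucc_castSucc (i j : Fin (l+1)) :
    aug A v i.castSucc j.castSucc = A i j := by
  simp [aug, i.isLt, j.isLt]

@[simp] theorem aug_last_castSucc (j : Fin (l+1)) : aug A v (Fin.last (l+1)) j.castSucc = v j := by
  simp [aug, j.isLt]

@[simp] theorem aug_castSucc_last (i : Fin (l+1)) : aug A v i.castSucc (Fin.last (l+1)) = 0 := by
  simp [aug, i.isLt]

@[simp] theorem aug_last_last : aug A v (Fin.last (l+1)) (Fin.last (l+1)) = 1 := by
  simp [aug]

theorem aug_apply_last (k : Fin (l+2)) :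
    aug A v k (Fin.last (l+1)) = if k = Fin.last (l+1) then 1 else 0 := by
  induction k using Fin.lastCases <;> simp [Fin.castSucc_ne_last]

theorem aug_sub_one_submatrix_last :
    (aug A v - 1).submatrix (Fin.last (l+1)).succAbove (Fin.last (l+1)).succAbove = A - 1 := by
  ext i j
  simp [Matrix.one_apply]

theorem aug_sub_one_submatrix_castSucc_last :
    (aug A v - 1).submatrix (Fin.last l).castSucc.succAbove (Fin.last (l+1)).succAbove
      = (A - 1).updateRow (Fin.last l) v := by
  refine Matrix.ext fun i j => ?_
  induction i using Fin.lastCases with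
  | last => simp [(Fin.castSucc_ne_last _).symm]
  | cast i =>
    rw [Matrix.submatrix_apply, Fin.succAbove_castSucc_of_lt _ _ (Fin.castSucc_lt_last i),
      Fin.succAbove_last, Matrix.updateRow_ne (Fin.castSucc_ne_last i)]
    simp [Matrix.one_apply]

end Aug

section Block

variable {μ l : ℕ}

theorem last2Block_one_zero (b d : Lau μ) :
    last2Block l 1 b 0 d
      = (1 : Matrix (Fin (l+2)) (Fin (l+2)) (Lau μ)).updateCol (Fin.last (l+1))
          (b • Pi.single (Fin.last l).castSucc 1 + d • Pi.single (Fin.last (l+1)) 1) := by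
  refine Matrix.ext fun i j => ?_
  simp only [last2Block, Matrix.updateCol_apply, Matrix.one_apply, Fin.ext_iff, Pi.add_apply,
    Pi.smul_apply, Pi.single_apply, Fin.val_last, Fin.val_castSucc, smul_eq_mul]
  split_ifs <;> first | omega | simp

theorem det_aug_mul_last2Block_sub_one (A : Matrix (Fin (l+1)) (Fin (l+1)) (Lau μ))
    (v : Fin (l+1) → Lau μ) (b d : Lau μ) :
    (aug A v * last2Block l 1 b 0 d - 1).det
      = (d - 1) * (A - 1).det - b * ((A - 1).updateRow (Fin.last l) v).det := by
  set P := aug A v - 1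
  set Q := P.updateCol (Fin.last (l+1))
    (b • Pi.single (Fin.last l).castSucc 1 + (d - 1) • Pi.single (Fin.last (l+1)) 1)
  have hN : aug A v * last2Block l 1 b 0 d - 1 = Q.updateCol (Fin.last (l+1))
      fun k => Q k (Fin.last (l+1)) + b • Q k (Fin.last l).castSucc := by
    refine Matrix.ext fun k j => ?_
    rw [last2Block_one_zero, Matrix.mul_updateCol, Matrix.mul_one]
    rcases eq_or_ne j (Fin.last (l+1)) with rfl | hj
    · simp only [Matrix.mulVec_add, Matrix.mulVec_smul, Matrix.mulVec_single_one, Q, P,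
        Matrix.sub_apply, Matrix.updateCol_self, Pi.add_apply, Pi.smul_apply, Matrix.col_apply,
        smul_eq_mul, aug_apply_last, mul_ite, mul_one, mul_zero, Matrix.one_apply, Pi.single_apply,
        Matrix.updateCol_ne (Fin.castSucc_ne_last _)]
      split_ifs <;> ring
    · simp [Q, P, hj]
  have hodd : (-1 : Lau μ) ^ (l + (l + 1)) = -1 := Odd.neg_one_pow ⟨l, by ring⟩
  have heven : (-1 : Lau μ) ^ (l + 1 + (l + 1)) = 1 := Even.neg_one_pow ⟨l + 1, rfl⟩
  rw [hN, Matrix.det_updateCol_add_smul_self _ (Fin.castSucc_lt_last _).ne',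
    Matrix.det_updateCol_add, Matrix.det_updateCol_smul, Matrix.det_updateCol_smul,
    Matrix.det_updateCol_single_fin, Matrix.det_updateCol_single_fin, aug_sub_one_submatrix_last,
    aug_sub_one_submatrix_castSucc_last]
  simp only [Fin.val_last, Fin.val_castSucc, hodd, heven]
  ring

end Block

theorem BoundaryRel.mul_det_updateRow_last {μ l : ℕ} {c : Fin (l+2) → Fin μ}
    {A : Matrix (Fin (l+1)) (Fin (l+1)) (Lau μ)} {v : Fin (l+1) → Lau μ}
    (hb : BoundaryRel c A v) :
    ((TU c (Fin.last (l+1)) : Lau μ) - 1) * ((A - 1).updateRow (Fin.last l) v).det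
      = -((TU c (Fin.last l).castSucc : Lau μ) - 1) * (A - 1).det := by
  refine Matrix.mul_det_updateRow_of_smul_eq_sum (A - 1) (Fin.last l) v
    (fun k => -((TU c k.castSucc : Lau μ) - 1)) _ ?_
  funext j
  simp only [Pi.smul_apply, smul_eq_mul, Finset.sum_apply, neg_mul, Finset.sum_neg_distrib, hb j,
    neg_neg]

/-- the determinant identity used to verify Jiang's axiom (R3). With
`t = t_{c_n}`, `s = t_{j₀}`, `M = [[A,0],[v,1]]` and `G''` the identity except for
the last `2×2` diagonal block `[[1, 1 − s⁻¹],[0, s⁻¹ t⁻¹]]`, if `(A,v)` satisfies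
the boundary relation for `c` then
`(T^c_n − 1) · det(M·G'' − I_n)
  = [(s⁻¹ t⁻¹ − 1)(T^c_n − 1) + (T^c_{n−1} − 1)(1 − s⁻¹)] · det(A − I_{n−1})`
(here `n = l + 2 ≥ 2`). -/
theorem stmt7 {μ l : ℕ} (c : Fin (l+2) → Fin μ) (j₀ : Fin μ)
    (A : Matrix (Fin (l+1)) (Fin (l+1)) (Lau μ)) (v : Fin (l+1) → Lau μ)
    (hb : BoundaryRel c A v) :
    ((TU c (Fin.last (l+1)) : Lau μ) - 1) *
        (aug A v *
            last2Block l 1 (1 - (((tU j₀)⁻¹ : (Lau μ)ˣ) : Lau μ)) 0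
              ((((tU j₀)⁻¹ : (Lau μ)ˣ) : Lau μ) *
                (((tU (c (Fin.last (l+1))))⁻¹ : (Lau μ)ˣ) : Lau μ)) - 1).det
      = (((((tU j₀)⁻¹ : (Lau μ)ˣ) : Lau μ) *
              (((tU (c (Fin.last (l+1))))⁻¹ : (Lau μ)ˣ) : Lau μ) - 1) *
            ((TU c (Fin.last (l+1)) : Lau μ) - 1)
          + ((TU c ((Fin.last l).castSucc) : Lau μ) - 1) *
              (1 - (((tU j₀)⁻¹ : (Lau μ)ˣ) : Lau μ))) *
          (A - 1).det := by
  rw [det_aug_mul_last2Block_sub_one]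
  linear_combination ((((tU j₀)⁻¹ : (Lau μ)ˣ) : Lau μ) - 1) * hb.mul_det_updateRow_last
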